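/- The identity D X₂ = −10·(1 − L⁵/5⁵) + 10·(1 − L⁵/5⁵)·X₁ + 5·(1 − L⁵/5⁵)·X₂ − 2·X₁² − 4·D X₁ − 2·X₁·X₂ − X₂² holds in ℂ[[x]]. -/

import Mathlib

set_option maxHeartbeats 1000000
set_option linter.unusedVariables false


open PowerSeries

/-- The derivation `D = x · d/dx` on `ℂ[[x]]`. -/
noncomputable def Dop (f : PowerSeries ℂ) : PowerSeries ℂ :=
  PowerSeries.X * PowerSeries.derivative ℂ f

/-- The power series `I_j = Σ_{m≥0} (−1)^m (∏_{l=0}^{m−1} (l + j/5)^5) x^{5m+j}/(5m+j)!`,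
for `1 ≤ j ≤ 3`.  (The coefficient of `x^n` is nonzero only for `n ≡ j mod 5`, in which
case `n = 5m + j` with `m = (n − j)/5`.) -/
noncomputable def Iser (j : ℕ) : PowerSeries ℂ :=
  PowerSeries.mk fun n =>
    if n % 5 = j then
      (-1 : ℂ) ^ ((n - j) / 5) *
        (∏ l ∈ Finset.range ((n - j) / 5), ((l : ℂ) + (j : ℂ) / 5) ^ 5) / (n.factorial : ℂ)
    else 0


lemma Dop_mul (f g : PowerSeries ℂ) : Dop (f * g) = Dop f * g + f * Dop g := by
  unfold Dop
  rw [Derivation.leibniz]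
  simp [smul_eq_mul]
  ring

lemma Dop_C (a : ℂ) : Dop ((PowerSeries.C (R := ℂ)) a) = 0 := by
  unfold Dop; simp

lemma coeff_Dop (f : PowerSeries ℂ) (n : ℕ) :
    PowerSeries.coeff (R := ℂ) n (Dop f) = n * PowerSeries.coeff (R := ℂ) n f := by
  unfold Dop
  cases n with
  | zero => simp [PowerSeries.coeff_zero_eq_constantCoeff]
  | succ m =>
      rw [PowerSeries.coeff_succ_X_mul, PowerSeries.coeff_derivative]
      push_cast; ring

lemma Dop_add (f g : PowerSeries ℂ) : Dop (f + g) = Dop f + Dop g := by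
  unfold Dop; rw [map_add]; ring

lemma Dop_sub (f g : PowerSeries ℂ) : Dop (f - g) = Dop f - Dop g := by
  unfold Dop; rw [map_sub]; ring

lemma Dop_one : Dop 1 = 0 := by
  unfold Dop; simp

lemma Dop_five : Dop (5 : PowerSeries ℂ) = 0 := by
  rw [← map_ofNat ((PowerSeries.C (R := ℂ))) 5]; exact Dop_C _

lemma Dop_ten : Dop (10 : PowerSeries ℂ) = 0 := by
  rw [← map_ofNat ((PowerSeries.C (R := ℂ))) 10]; exact Dop_C _

lemma Dop_X5 : Dop (PowerSeries.X ^ 5 : PowerSeries ℂ) = 5 * PowerSeries.X ^ 5 := by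
  ext n
  rw [coeff_Dop, show (5 : PowerSeries ℂ) = (PowerSeries.C (R := ℂ)) 5 from (map_ofNat _ 5).symm,
    PowerSeries.coeff_C_mul, PowerSeries.coeff_X_pow]
  split_ifs with h
  · subst h; norm_num
  · simp

lemma Dop_q : Dop ((PowerSeries.C (R := ℂ)) (1 / 5 ^ 5) * PowerSeries.X ^ 5) =
    5 * ((PowerSeries.C (R := ℂ)) (1 / 5 ^ 5) * PowerSeries.X ^ 5) := by
  rw [Dop_mul, Dop_C, Dop_X5]; ring
lemma coeff_X5_mul (f : PowerSeries ℂ) (n : ℕ) :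
    PowerSeries.coeff (R := ℂ) n (PowerSeries.X ^ 5 * f) =
      if 5 ≤ n then PowerSeries.coeff (R := ℂ) (n - 5) f else 0 := by
  split_ifs with h
  · conv_lhs => rw [show n = (n - 5) + 5 by omega]
    exact PowerSeries.coeff_X_pow_mul f 5 (n - 5)
  · rw [PowerSeries.coeff_mul]
    apply Finset.sum_eq_zero
    intro p hp
    rw [Finset.HasAntidiagonal.mem_antidiagonal] at hp
    rw [PowerSeries.coeff_X_pow]
    have : p.1 ≠ 5 := by omega
    simp [this]

lemma ode (j : ℕ) (hj : j = 1 ∨ j = 2) :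
    (1 + (PowerSeries.C (R := ℂ)) (1 / 5 ^ 5) * PowerSeries.X ^ 5) *
        Dop (Dop (Dop (Dop (Dop (Iser j))))) =
      (PowerSeries.C (R := ℂ)) 10 * Dop (Dop (Dop (Dop (Iser j))))
        - (PowerSeries.C (R := ℂ)) 35 * Dop (Dop (Dop (Iser j)))
        + (PowerSeries.C (R := ℂ)) 50 * Dop (Dop (Iser j))
        - (PowerSeries.C (R := ℂ)) 24 * Dop (Iser j) := by
  have hj5 : j < 5 := by omega
  ext n
  rw [add_mul, one_mul, mul_assoc, map_add, map_sub, map_add, map_sub,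
    PowerSeries.coeff_C_mul, PowerSeries.coeff_C_mul, PowerSeries.coeff_C_mul,
    PowerSeries.coeff_C_mul, PowerSeries.coeff_C_mul, coeff_X5_mul]
  simp only [coeff_Dop]
  rcases eq_or_ne (n % 5) j with hmod | hmod
  · -- n ≡ j (mod 5)
    have hdiv : (n - j) / 5 = n / 5 := by omega
    have hIn : PowerSeries.coeff (R := ℂ) n (Iser j) =
        (-1 : ℂ) ^ (n / 5) *
          (∏ l ∈ Finset.range (n / 5), ((l : ℂ) + (j : ℂ) / 5) ^ 5) / (n.factorial : ℂ) := by
      rw [Iser, PowerSeries.coeff_mk, if_pos hmod, hdiv]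
    obtain ⟨m, hm⟩ : ∃ m, n / 5 = m := ⟨_, rfl⟩
    rw [hm] at hdiv hIn
    rcases Nat.eq_zero_or_pos m with hm0 | hm1
    · -- n = j < 5
      have h5 : ¬ (5 ≤ n) := by omega
      rw [if_neg h5]
      rcases hj with rfl | rfl
      · have hn : n = 1 := by omega
        subst hn; push_cast; ring
      · have hn : n = 2 := by omega
        subst hn; push_cast; ring
    · -- n ≥ 5
      have h5 : 5 ≤ n := by omega
      rw [if_pos h5]
      have hmod' : (n - 5) % 5 = j := by omega
      have hIn' : PowerSeries.coeff (R := ℂ) (n - 5) (Iser j) =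
          (-1 : ℂ) ^ (m - 1) *
            (∏ l ∈ Finset.range (m - 1), ((l : ℂ) + (j : ℂ) / 5) ^ 5) /
              ((n - 5).factorial : ℂ) := by
        have hdiv' : (n - 5 - j) / 5 = m - 1 := by omega
        rw [Iser, PowerSeries.coeff_mk, if_pos hmod', hdiv']
      -- expand the product and factorial
      have hprod : (∏ l ∈ Finset.range m, ((l : ℂ) + (j : ℂ) / 5) ^ 5)
          = (∏ l ∈ Finset.range (m - 1), ((l : ℂ) + (j : ℂ) / 5) ^ 5)
            * (((m : ℂ) - 1) + (j : ℂ) / 5) ^ 5 := by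
        conv_lhs => rw [show m = (m - 1) + 1 by omega]
        rw [Finset.prod_range_succ]
        congr 2
        push_cast [show ((m - 1 : ℕ) : ℂ) = (m : ℂ) - 1 by
          push_cast [Nat.cast_sub hm1]; ring]
        ring
      have hfacN : n.factorial =
          (n - 5).factorial * ((n - 4) * (n - 3) * (n - 2) * (n - 1) * n) := by
        obtain ⟨k, rfl⟩ : ∃ k, n = k + 5 := ⟨n - 5, by omega⟩
        simp only [Nat.add_sub_cancel, show k + 5 - 4 = k + 1 by omega,
          show k + 5 - 3 = k + 2 by omega, show k + 5 - 2 = k + 3 by omega,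
          show k + 5 - 1 = k + 4 by omega]
        rw [show k + 5 = (k + 4) + 1 from rfl, Nat.factorial_succ,
          show k + 4 = (k + 3) + 1 from rfl, Nat.factorial_succ,
          show k + 3 = (k + 2) + 1 from rfl, Nat.factorial_succ,
          show k + 2 = (k + 1) + 1 from rfl, Nat.factorial_succ,
          show k + 1 = k + 1 from rfl, Nat.factorial_succ]
        ring
      have hfacC : (n.factorial : ℂ) =
          ((n - 5).factorial : ℂ) * (((n : ℂ) - 4) * ((n : ℂ) - 3) * ((n : ℂ) - 2)
            * ((n : ℂ) - 1) * (n : ℂ)) := by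
        rw [hfacN]
        push_cast [Nat.cast_sub (show 4 ≤ n by omega), Nat.cast_sub (show 3 ≤ n by omega),
          Nat.cast_sub (show 2 ≤ n by omega), Nat.cast_sub (show 1 ≤ n by omega)]
        ring
      have hsgn : (-1 : ℂ) ^ m = (-1 : ℂ) ^ (m - 1) * (-1) := by
        conv_lhs => rw [show m = (m - 1) + 1 by omega]
        rw [pow_succ]
      have hmc : ((m : ℂ) - 1) + (j : ℂ) / 5 = ((n : ℂ) - 5) / 5 := by
        have hnm : n = 5 * m + j := by omega
        have : (n : ℂ) = 5 * (m : ℂ) + (j : ℂ) := by exact_mod_cast congrArg Nat.cast hnm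
        rw [this]; ring
      have hn5 : ((n - 5 : ℕ) : ℂ) = (n : ℂ) - 5 := by
        push_cast [Nat.cast_sub h5]; ring
      have hF1 : ((n - 5).factorial : ℂ) ≠ 0 :=
        Nat.cast_ne_zero.2 (Nat.factorial_pos _).ne'
      have hnz4 : ((n : ℂ) - 4) ≠ 0 := by
        intro h
        have h2 : (n : ℂ) = 4 := by
          have := sub_eq_zero.mp h
          simpa using this
        have : n = 4 := by exact_mod_cast h2
        omega
      have hnz3 : ((n : ℂ) - 3) ≠ 0 := by
        intro h
        have h2 : (n : ℂ) = 3 := by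
          have := sub_eq_zero.mp h
          simpa using this
        have : n = 3 := by exact_mod_cast h2
        omega
      have hnz2 : ((n : ℂ) - 2) ≠ 0 := by
        intro h
        have h2 : (n : ℂ) = 2 := by
          have := sub_eq_zero.mp h
          simpa using this
        have : n = 2 := by exact_mod_cast h2
        omega
      have hnz1 : ((n : ℂ) - 1) ≠ 0 := by
        intro h
        have h2 : (n : ℂ) = 1 := by
          have := sub_eq_zero.mp h
          simpa using this
        have : n = 1 := by exact_mod_cast h2
        omega
      have hnz0 : (n : ℂ) ≠ 0 := by
        intro h
        have : n = 0 := by exact_mod_cast h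
        omega
      obtain ⟨D, hD⟩ : ∃ D, ((n:ℂ) - 4) * ((n:ℂ) - 3) * ((n:ℂ) - 2) * ((n:ℂ) - 1) * (n:ℂ) = D :=
        ⟨_, rfl⟩
      have hD0 : D ≠ 0 := by
        rw [← hD]
        exact mul_ne_zero (mul_ne_zero (mul_ne_zero (mul_ne_zero hnz4 hnz3) hnz2) hnz1) hnz0
      have hkey : D * PowerSeries.coeff (R := ℂ) n (Iser j) =
          -((((n:ℂ) - 5) / 5) ^ 5) * PowerSeries.coeff (R := ℂ) (n - 5) (Iser j) := by
        rw [hIn, hIn', hprod, hsgn, hmc, hfacC, hD]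
        generalize (∏ l ∈ Finset.range (m - 1), ((l : ℂ) + (j : ℂ) / 5) ^ 5) = P
        field_simp
      rw [hn5]
      apply mul_left_cancel₀ hD0
      linear_combination (((n:ℂ)^5 - (10*(n:ℂ)^4 - 35*(n:ℂ)^3 + 50*(n:ℂ)^2 - 24*(n:ℂ)))) * hkey
        - ((n:ℂ) - 5)^5 * (PowerSeries.coeff (R := ℂ) (n - 5) (Iser j)) / 3125 * hD
  · -- n ≢ j (mod 5): everything vanishes
    have hIn : PowerSeries.coeff (R := ℂ) n (Iser j) = 0 := by
      rw [Iser, PowerSeries.coeff_mk, if_neg hmod]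
    rw [hIn]
    split_ifs with h5
    · have hIn' : PowerSeries.coeff (R := ℂ) (n - 5) (Iser j) = 0 := by
        rw [Iser, PowerSeries.coeff_mk, if_neg (by omega)]
      rw [hIn']; ring
    · ring

lemma ode' (j : ℕ) (hj : j = 1 ∨ j = 2) :
    (1 + (PowerSeries.C (R := ℂ)) (1 / 5 ^ 5) * PowerSeries.X ^ 5) *
        Dop (Dop (Dop (Dop (Dop (Iser j))))) =
      10 * Dop (Dop (Dop (Dop (Iser j))))
        - 35 * Dop (Dop (Dop (Iser j)))
        + 50 * Dop (Dop (Iser j))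
        - 24 * Dop (Iser j) := by
  have h := ode j hj
  simpa only [map_ofNat] using h
/-- `D X₂ = −10(1 − L⁵/5⁵) + 10(1 − L⁵/5⁵)X₁ + 5(1 − L⁵/5⁵)X₂ − 2X₁² − 4·D X₁ − 2X₁X₂ − X₂²`. -/
theorem stmt5 (L g₂ X₁ X₂ : PowerSeries ℂ)
    (hL0 : PowerSeries.constantCoeff L = 0)
    (hL1 : PowerSeries.coeff 1 L = 1)
    (hLeq : L ^ 5 * (1 + PowerSeries.C (1 / 5 ^ 5 : ℂ) * PowerSeries.X ^ 5)
      = PowerSeries.X ^ 5)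
    (hg₂ : g₂ * Dop (Iser 1) = Dop (Iser 2))
    (hX₁ : X₁ * Dop (Iser 1) = Dop (Dop (Iser 1)))
    (hX₂ : X₂ * Dop g₂ = Dop (Dop g₂)) :
    Dop X₂ =
      -10 * (1 - PowerSeries.C (1 / 5 ^ 5 : ℂ) * L ^ 5)
        + 10 * (1 - PowerSeries.C (1 / 5 ^ 5 : ℂ) * L ^ 5) * X₁
        + 5 * (1 - PowerSeries.C (1 / 5 ^ 5 : ℂ) * L ^ 5) * X₂
        - 2 * X₁ ^ 2 - 4 * Dop X₁ - 2 * X₁ * X₂ - X₂ ^ 2 := by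
  have hodeC := ode' 1 (Or.inl rfl)
  have hodeY := ode' 2 (Or.inr rfl)
  -- basic nonvanishing
  have hc0ne : Dop (Iser 1) ≠ 0 := by
    intro h
    have h1 : PowerSeries.coeff (R := ℂ) 1 (Dop (Iser 1)) = 1 := by
      rw [coeff_Dop, Iser, PowerSeries.coeff_mk]
      norm_num
    rw [h] at h1
    simp at h1
  have h1qne : (1 + ((PowerSeries.C (R := ℂ)) (1 / 5 ^ 5) * PowerSeries.X ^ 5)) ≠ 0 := by
    intro h
    have := congrArg (PowerSeries.constantCoeff (R := ℂ)) h
    simp at this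
  -- hu
  have hu : (1 - (PowerSeries.C (R := ℂ)) (1 / 5 ^ 5) * L ^ 5) * (1 + ((PowerSeries.C (R := ℂ)) (1 / 5 ^ 5) * PowerSeries.X ^ 5)) = 1 := by
    linear_combination (-((PowerSeries.C (R := ℂ)) (1 / 5 ^ 5))) * hLeq
  -- derivatives of hg₂
  have t1 := congrArg Dop hg₂
  rw [Dop_mul] at t1
  have t2 := congrArg Dop t1
  simp only [Dop_add, Dop_mul] at t2
  have t3 := congrArg Dop t2
  simp only [Dop_add, Dop_mul] at t3
  have s1 := congrArg Dop hX₁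
  rw [Dop_mul] at s1
  have s2 := congrArg Dop hX₂
  rw [Dop_mul] at s2
  -- support lemmas
  have hc0s : ∀ a : ℕ, a % 5 ≠ 1 → PowerSeries.coeff (R := ℂ) a (Dop (Iser 1)) = 0 := by
    intro a ha
    rw [coeff_Dop, Iser, PowerSeries.coeff_mk, if_neg ha, mul_zero]
  have hc1s : ∀ a : ℕ, a % 5 ≠ 1 → PowerSeries.coeff (R := ℂ) a (Dop (Dop (Iser 1))) = 0 := by
    intro a ha; rw [coeff_Dop, hc0s a ha, mul_zero]
  have hc2s : ∀ a : ℕ, a % 5 ≠ 1 → PowerSeries.coeff (R := ℂ) a (Dop (Dop (Dop (Iser 1)))) = 0 := by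
    intro a ha; rw [coeff_Dop, hc1s a ha, mul_zero]
  have hc3s : ∀ a : ℕ, a % 5 ≠ 1 → PowerSeries.coeff (R := ℂ) a (Dop (Dop (Dop (Dop (Iser 1))))) = 0 := by
    intro a ha; rw [coeff_Dop, hc2s a ha, mul_zero]
  have hy0s : ∀ a : ℕ, a % 5 ≠ 2 → PowerSeries.coeff (R := ℂ) a (Dop (Iser 2)) = 0 := by
    intro a ha
    rw [coeff_Dop, Iser, PowerSeries.coeff_mk, if_neg ha, mul_zero]
  have hy1s : ∀ a : ℕ, a % 5 ≠ 2 → PowerSeries.coeff (R := ℂ) a (Dop (Dop (Iser 2))) = 0 := by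
    intro a ha; rw [coeff_Dop, hy0s a ha, mul_zero]
  have hy2s : ∀ a : ℕ, a % 5 ≠ 2 → PowerSeries.coeff (R := ℂ) a (Dop (Dop (Dop (Iser 2)))) = 0 := by
    intro a ha; rw [coeff_Dop, hy1s a ha, mul_zero]
  have hy3s : ∀ a : ℕ, a % 5 ≠ 2 → PowerSeries.coeff (R := ℂ) a (Dop (Dop (Dop (Dop (Iser 2))))) = 0 := by
    intro a ha; rw [coeff_Dop, hy2s a ha, mul_zero]
  have hprodz : ∀ f g : PowerSeries ℂ,
      (∀ a : ℕ, a % 5 ≠ 1 → PowerSeries.coeff (R := ℂ) a f = 0) →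
      (∀ b : ℕ, b % 5 ≠ 2 → PowerSeries.coeff (R := ℂ) b g = 0) →
      ∀ n : ℕ, n % 5 ≠ 3 → PowerSeries.coeff (R := ℂ) n (f * g) = 0 := by
    intro f g hf hg n hn
    rw [PowerSeries.coeff_mul]
    apply Finset.sum_eq_zero
    intro p hp
    rw [Finset.HasAntidiagonal.mem_antidiagonal] at hp
    by_cases h1 : p.1 % 5 = 1
    · have h2 : p.2 % 5 ≠ 2 := by omega
      rw [hg _ h2, mul_zero]
    · rw [hf _ h1, zero_mul]
  have hT : ∀ n : ℕ, n % 5 ≠ 3 → PowerSeries.coeff (R := ℂ) n ((Dop (Dop (Dop (Dop (Iser 1))))) * (Dop (Iser 2)) - (Dop (Dop (Dop (Iser 1)))) * (Dop (Dop (Iser 2))) + (Dop (Dop (Iser 1))) * (Dop (Dop (Dop (Iser 2)))) - (Dop (Iser 1)) * (Dop (Dop (Dop (Dop (Iser 2)))))) = 0 := by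
    intro n hn
    rw [map_sub, map_add, map_sub, hprodz _ _ hc3s hy0s n hn, hprodz _ _ hc2s hy1s n hn,
      hprodz _ _ hc1s hy2s n hn, hprodz _ _ hc0s hy3s n hn]
    ring
  have hTB : ∀ n : ℕ, n % 5 ≠ 3 → PowerSeries.coeff (R := ℂ) n ((Dop (Dop (Dop (Iser 1)))) * (Dop (Iser 2)) - (Dop (Iser 1)) * (Dop (Dop (Dop (Iser 2))))) = 0 := by
    intro n hn
    rw [map_sub, hprodz _ _ hc2s hy0s n hn, hprodz _ _ hc0s hy2s n hn]
    ring
  have hTC : ∀ n : ℕ, n % 5 ≠ 3 → PowerSeries.coeff (R := ℂ) n ((Dop (Dop (Iser 1))) * (Dop (Iser 2)) - (Dop (Iser 1)) * (Dop (Dop (Iser 2)))) = 0 := by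
    intro n hn
    rw [map_sub, hprodz _ _ hc1s hy0s n hn, hprodz _ _ hc0s hy1s n hn]
    ring
  -- D S = 5 S
  have hDS : Dop (((Dop (Dop (Dop (Dop (Iser 1))))) * (Dop (Iser 2)) - (Dop (Dop (Dop (Iser 1)))) * (Dop (Dop (Iser 2))) + (Dop (Dop (Iser 1))) * (Dop (Dop (Dop (Iser 2)))) - (Dop (Iser 1)) * (Dop (Dop (Dop (Dop (Iser 2)))))) + ((PowerSeries.C (R := ℂ)) (1 / 5 ^ 5) * PowerSeries.X ^ 5) * ((Dop (Dop (Dop (Dop (Iser 1))))) * (Dop (Iser 2)) - (Dop (Dop (Dop (Iser 1)))) * (Dop (Dop (Iser 2))) + (Dop (Dop (Iser 1))) * (Dop (Dop (Dop (Iser 2)))) - (Dop (Iser 1)) * (Dop (Dop (Dop (Dop (Iser 2)))))) - 5 * ((Dop (Dop (Dop (Iser 1)))) * (Dop (Iser 2)) - (Dop (Iser 1)) * (Dop (Dop (Dop (Iser 2))))) + 10 * ((Dop (Dop (Iser 1))) * (Dop (Iser 2)) - (Dop (Iser 1)) * (Dop (Dop (Iser 2))))) = 5 * (((Dop (Dop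 (Dop (Dop (Iser 1))))) * (Dop (Iser 2)) - (Dop (Dop (Dop (Iser 1)))) * (Dop (Dop (Iser 2))) + (Dop (Dop (Iser 1))) * (Dop (Dop (Dop (Iser 2)))) - (Dop (Iser 1)) * (Dop (Dop (Dop (Dop (Iser 2)))))) + ((PowerSeries.C (R := ℂ)) (1 / 5 ^ 5) * PowerSeries.X ^ 5) * ((Dop (Dop (Dop (Dop (Iser 1))))) * (Dop (Iser 2)) - (Dop (Dop (Dop (Iser 1)))) * (Dop (Dop (Iser 2))) + (Dop (Dop (Iser 1))) * (Dop (Dop (Dop (Iser 2)))) - (Dop (Iser 1)) * (Dop (Dop (Dop (Dop (Iser 2)))))) - 5 * ((Dop (Dop (Dop (Iser 1)))) * (Dop (Iser 2)) - (Dop (Iser 1)) * (Dop (Dop (Dop (Iser 2))))) + 10 * ((Dop (Dop (Iser 1))) * (Dop (Iser 2)) - (Dop (Iser 1)) * (Dop (Dop (Iser 2))))) := by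
    simp only [Dop_add, Dop_sub, Dop_mul, Dop_C, Dop_X5, Dop_five, Dop_ten]
    linear_combination (Dop (Iser 2)) * hodeC - (Dop (Iser 1)) * hodeY
  -- coeff 5 of S vanishes
  have h5S : PowerSeries.coeff (R := ℂ) 5 (((Dop (Dop (Dop (Dop (Iser 1))))) * (Dop (Iser 2)) - (Dop (Dop (Dop (Iser 1)))) * (Dop (Dop (Iser 2))) + (Dop (Dop (Iser 1))) * (Dop (Dop (Dop (Iser 2)))) - (Dop (Iser 1)) * (Dop (Dop (Dop (Dop (Iser 2)))))) + ((PowerSeries.C (R := ℂ)) (1 / 5 ^ 5) * PowerSeries.X ^ 5) * ((Dop (Dop (Dop (Dop (Iser 1))))) * (Dop (Iser 2)) - (Dop (Dop (Dop (Iser 1)))) * (Dop (Dop (Iser 2))) + (Dop (Dop (Iser 1))) * (Dop (Dop (Dop (Iser 2)))) - (Dop (Iser 1)) * (Dop (Dop (Dop (Dop (Iser 2)))))) - 5 * ((Dop (Dop (Dop (Iser 1)))) * (Dop (Iser 2)) - (Dop (Iser 1)) * (Dop (Dop (Dop (Iser 2))))) + 10 * ((Dop (Dop (Iser 1))) * (Dop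 (Iser 2)) - (Dop (Iser 1)) * (Dop (Dop (Iser 2))))) = 0 := by
    have e : (((Dop (Dop (Dop (Dop (Iser 1))))) * (Dop (Iser 2)) - (Dop (Dop (Dop (Iser 1)))) * (Dop (Dop (Iser 2))) + (Dop (Dop (Iser 1))) * (Dop (Dop (Dop (Iser 2)))) - (Dop (Iser 1)) * (Dop (Dop (Dop (Dop (Iser 2)))))) + ((PowerSeries.C (R := ℂ)) (1 / 5 ^ 5) * PowerSeries.X ^ 5) * ((Dop (Dop (Dop (Dop (Iser 1))))) * (Dop (Iser 2)) - (Dop (Dop (Dop (Iser 1)))) * (Dop (Dop (Iser 2))) + (Dop (Dop (Iser 1))) * (Dop (Dop (Dop (Iser 2)))) - (Dop (Iser 1)) * (Dop (Dop (Dop (Dop (Iser 2)))))) - 5 * ((Dop (Dop (Dop (Iser 1)))) * (Dop (Iser 2)) - (Dop (Iser 1)) * (Dop (Dop (Dop (Iser 2))))) + 10 * ((Dop (Dop (Iser 1))) * (Dop (Iser 2)) - (Dop (Iser 1)) * (Dop (Dop (Iser 2))))) = ((Dop (Dop (Dop (Dop (Iser 1))))) * (Dop (Iser 2)) - (Dop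 (Dop (Dop (Iser 1)))) * (Dop (Dop (Iser 2))) + (Dop (Dop (Iser 1))) * (Dop (Dop (Dop (Iser 2)))) - (Dop (Iser 1)) * (Dop (Dop (Dop (Dop (Iser 2)))))) + (PowerSeries.C (R := ℂ)) (1 / 5 ^ 5) * (PowerSeries.X ^ 5 * ((Dop (Dop (Dop (Dop (Iser 1))))) * (Dop (Iser 2)) - (Dop (Dop (Dop (Iser 1)))) * (Dop (Dop (Iser 2))) + (Dop (Dop (Iser 1))) * (Dop (Dop (Dop (Iser 2)))) - (Dop (Iser 1)) * (Dop (Dop (Dop (Dop (Iser 2)))))))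
        - (PowerSeries.C (R := ℂ)) 5 * ((Dop (Dop (Dop (Iser 1)))) * (Dop (Iser 2)) - (Dop (Iser 1)) * (Dop (Dop (Dop (Iser 2))))) + (PowerSeries.C (R := ℂ)) 10 * ((Dop (Dop (Iser 1))) * (Dop (Iser 2)) - (Dop (Iser 1)) * (Dop (Dop (Iser 2)))) := by
      simp only [map_ofNat]
      ring
    rw [e, map_add, map_sub, map_add, PowerSeries.coeff_C_mul, PowerSeries.coeff_C_mul,
      PowerSeries.coeff_C_mul, coeff_X5_mul, hT 5 (by norm_num), hT 0 (by norm_num),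
      hTB 5 (by norm_num), hTC 5 (by norm_num)]
    norm_num
  -- S = 0
  have hSzero : (((Dop (Dop (Dop (Dop (Iser 1))))) * (Dop (Iser 2)) - (Dop (Dop (Dop (Iser 1)))) * (Dop (Dop (Iser 2))) + (Dop (Dop (Iser 1))) * (Dop (Dop (Dop (Iser 2)))) - (Dop (Iser 1)) * (Dop (Dop (Dop (Dop (Iser 2)))))) + ((PowerSeries.C (R := ℂ)) (1 / 5 ^ 5) * PowerSeries.X ^ 5) * ((Dop (Dop (Dop (Dop (Iser 1))))) * (Dop (Iser 2)) - (Dop (Dop (Dop (Iser 1)))) * (Dop (Dop (Iser 2))) + (Dop (Dop (Iser 1))) * (Dop (Dop (Dop (Iser 2)))) - (Dop (Iser 1)) * (Dop (Dop (Dop (Dop (Iser 2)))))) - 5 * ((Dop (Dop (Dop (Iser 1)))) * (Dop (Iser 2)) - (Dop (Iser 1)) * (Dop (Dop (Dop (Iser 2))))) + 10 * ((Dop (Dop (Iser 1))) * (Dop (Iser 2)) - (Dop (Iser 1)) * (Dop (Dop (Iser 2))))) = 0 := by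
    ext n
    rw [map_zero]
    rcases eq_or_ne n 5 with rfl | hne
    · exact h5S
    · have hn := congrArg (PowerSeries.coeff (R := ℂ) n) hDS
      rw [coeff_Dop, show (5 : PowerSeries ℂ) * (((Dop (Dop (Dop (Dop (Iser 1))))) * (Dop (Iser 2)) - (Dop (Dop (Dop (Iser 1)))) * (Dop (Dop (Iser 2))) + (Dop (Dop (Iser 1))) * (Dop (Dop (Dop (Iser 2)))) - (Dop (Iser 1)) * (Dop (Dop (Dop (Dop (Iser 2)))))) + ((PowerSeries.C (R := ℂ)) (1 / 5 ^ 5) * PowerSeries.X ^ 5) * ((Dop (Dop (Dop (Dop (Iser 1))))) * (Dop (Iser 2)) - (Dop (Dop (Dop (Iser 1)))) * (Dop (Dop (Iser 2))) + (Dop (Dop (Iser 1))) * (Dop (Dop (Dop (Iser 2)))) - (Dop (Iser 1)) * (Dop (Dop (Dop (Dop (Iser 2)))))) - 5 * ((Dop (Dop (Dop (Iser 1)))) * (Dop (Iser 2)) - (Dop (Iser 1)) * (Dop (Dop (Dop (Iser 2))))) + 10 * ((Dop (Dop (Iser 1))) * (Dop (Iser 2)) - (Dop (Iser 1)) * (Dop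 (Dop (Iser 2))))) = (PowerSeries.C (R := ℂ)) 5 * (((Dop (Dop (Dop (Dop (Iser 1))))) * (Dop (Iser 2)) - (Dop (Dop (Dop (Iser 1)))) * (Dop (Dop (Iser 2))) + (Dop (Dop (Iser 1))) * (Dop (Dop (Dop (Iser 2)))) - (Dop (Iser 1)) * (Dop (Dop (Dop (Dop (Iser 2)))))) + ((PowerSeries.C (R := ℂ)) (1 / 5 ^ 5) * PowerSeries.X ^ 5) * ((Dop (Dop (Dop (Dop (Iser 1))))) * (Dop (Iser 2)) - (Dop (Dop (Dop (Iser 1)))) * (Dop (Dop (Iser 2))) + (Dop (Dop (Iser 1))) * (Dop (Dop (Dop (Iser 2)))) - (Dop (Iser 1)) * (Dop (Dop (Dop (Dop (Iser 2)))))) - 5 * ((Dop (Dop (Dop (Iser 1)))) * (Dop (Iser 2)) - (Dop (Iser 1)) * (Dop (Dop (Dop (Iser 2))))) + 10 * ((Dop (Dop (Iser 1))) * (Dop (Iser 2)) - (Dop (Iser 1)) * (Dop (Dop (Iser 2))))) by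
        simp only [map_ofNat], PowerSeries.coeff_C_mul] at hn
      have hns : ((n : ℂ) - 5) * PowerSeries.coeff (R := ℂ) n (((Dop (Dop (Dop (Dop (Iser 1))))) * (Dop (Iser 2)) - (Dop (Dop (Dop (Iser 1)))) * (Dop (Dop (Iser 2))) + (Dop (Dop (Iser 1))) * (Dop (Dop (Dop (Iser 2)))) - (Dop (Iser 1)) * (Dop (Dop (Dop (Dop (Iser 2)))))) + ((PowerSeries.C (R := ℂ)) (1 / 5 ^ 5) * PowerSeries.X ^ 5) * ((Dop (Dop (Dop (Dop (Iser 1))))) * (Dop (Iser 2)) - (Dop (Dop (Dop (Iser 1)))) * (Dop (Dop (Iser 2))) + (Dop (Dop (Iser 1))) * (Dop (Dop (Dop (Iser 2)))) - (Dop (Iser 1)) * (Dop (Dop (Dop (Dop (Iser 2)))))) - 5 * ((Dop (Dop (Dop (Iser 1)))) * (Dop (Iser 2)) - (Dop (Iser 1)) * (Dop (Dop (Dop (Iser 2))))) + 10 * ((Dop (Dop (Iser 1))) * (Dop (Iser 2)) - (Dop (Iser 1)) * (Dop (Dop (Iser 2))))) = 0 := by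
        linear_combination hn
      rcases mul_eq_zero.mp hns with h | h
      · exfalso
        have : (n : ℂ) = 5 := by linear_combination h
        have : n = 5 := by exact_mod_cast this
        exact hne this
      · exact h
  -- KEY identity
  have hKEYm : ((Dop (Dop (Dop g₂))) * (Dop (Iser 1))^2 - (-10 * (1 - (PowerSeries.C (R := ℂ)) (1 / 5 ^ 5) * L ^ 5) * (Dop (Iser 1))^2 + 10 * (1 - (PowerSeries.C (R := ℂ)) (1 / 5 ^ 5) * L ^ 5) * (Dop (Dop (Iser 1))) * (Dop (Iser 1)) + 2 * (Dop (Dop (Iser 1)))^2 - 4 * (Dop (Dop (Dop (Iser 1)))) * (Dop (Iser 1))) * (Dop g₂) - (5 * (1 - (PowerSeries.C (R := ℂ)) (1 / 5 ^ 5) * L ^ 5) * (Dop (Iser 1))^2 - 2 * (Dop (Dop (Iser 1))) * (Dop (Iser 1))) * (Dop (Dop g₂)))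
      * ((Dop (Iser 1))^3 * (1 + ((PowerSeries.C (R := ℂ)) (1 / 5 ^ 5) * PowerSeries.X ^ 5))) = 0 := by
    linear_combination
      ((1 + ((PowerSeries.C (R := ℂ)) (1 / 5 ^ 5) * PowerSeries.X ^ 5)) * (Dop (Iser 1))^4) * t3
      + ((-((Dop (Iser 1))^3 * (Dop (Dop (Iser 1)))) - 5 * (Dop (Iser 1))^4 * (1 - (PowerSeries.C (R := ℂ)) (1 / 5 ^ 5) * L ^ 5)) * (1 + ((PowerSeries.C (R := ℂ)) (1 / 5 ^ 5) * PowerSeries.X ^ 5))) * t2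
      + (((Dop (Iser 1))^3 * (Dop (Dop (Dop (Iser 1)))) + 10 * (Dop (Iser 1))^4 * (1 - (PowerSeries.C (R := ℂ)) (1 / 5 ^ 5) * L ^ 5)) * (1 + ((PowerSeries.C (R := ℂ)) (1 / 5 ^ 5) * PowerSeries.X ^ 5))) * t1
      + ((-((Dop (Iser 1))^3 * (Dop (Dop (Dop (Dop (Iser 1)))))) + 5 * (Dop (Iser 1))^3 * (Dop (Dop (Dop (Iser 1)))) * (1 - (PowerSeries.C (R := ℂ)) (1 / 5 ^ 5) * L ^ 5)
          - 10 * (Dop (Iser 1))^3 * (Dop (Dop (Iser 1))) * (1 - (PowerSeries.C (R := ℂ)) (1 / 5 ^ 5) * L ^ 5)) * (1 + ((PowerSeries.C (R := ℂ)) (1 / 5 ^ 5) * PowerSeries.X ^ 5))) * hg₂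
      + (-((Dop (Iser 1))^3)) * hSzero
      + (5 * (Dop (Iser 1))^3 * (Dop (Dop (Dop (Iser 1)))) * (Dop (Iser 2)) - 10 * (Dop (Iser 1))^3 * (Dop (Dop (Iser 1))) * (Dop (Iser 2))
          - 5 * (Dop (Iser 1))^4 * (Dop (Dop (Dop (Iser 2)))) + 10 * (Dop (Iser 1))^4 * (Dop (Dop (Iser 2)))) * hu
  have hKEY : (Dop (Dop (Dop g₂))) * (Dop (Iser 1))^2 = (-10 * (1 - (PowerSeries.C (R := ℂ)) (1 / 5 ^ 5) * L ^ 5) * (Dop (Iser 1))^2 + 10 * (1 - (PowerSeries.C (R := ℂ)) (1 / 5 ^ 5) * L ^ 5) * (Dop (Dop (Iser 1))) * (Dop (Iser 1)) + 2 * (Dop (Dop (Iser 1)))^2 - 4 * (Dop (Dop (Dop (Iser 1)))) * (Dop (Iser 1))) * (Dop g₂) + (5 * (1 - (PowerSeries.C (R := ℂ)) (1 / 5 ^ 5) * L ^ 5) * (Dop (Iser 1))^2 - 2 * (Dop (Dop (Iser 1))) * (Dop (Iser 1))) * (Dop (Dop g₂)) := by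
    have hM : (Dop (Iser 1))^3 * (1 + ((PowerSeries.C (R := ℂ)) (1 / 5 ^ 5) * PowerSeries.X ^ 5)) ≠ 0 :=
      mul_ne_zero (pow_ne_zero 3 hc0ne) h1qne
    have := (mul_eq_zero.mp hKEYm).resolve_right hM
    linear_combination this
  -- nonvanishing of Dop g₂
  have hg1ne : (Dop g₂) ≠ 0 := by
    have hco : PowerSeries.coeff (R := ℂ) 1 g₂ = 1 := by
      have h2 := congrArg (PowerSeries.coeff (R := ℂ) 2) hg₂
      rw [PowerSeries.coeff_mul, Finset.Nat.sum_antidiagonal_eq_sum_range_succ_mk,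
        Finset.sum_range_succ, Finset.sum_range_succ, Finset.sum_range_one] at h2
      have e0 : PowerSeries.coeff (R := ℂ) 0 (Dop (Iser 1)) = 0 := hc0s 0 (by norm_num)
      have e2 : PowerSeries.coeff (R := ℂ) 2 (Dop (Iser 1)) = 0 := hc0s 2 (by norm_num)
      have e1 : PowerSeries.coeff (R := ℂ) 1 (Dop (Iser 1)) = 1 := by
        rw [coeff_Dop, Iser, PowerSeries.coeff_mk]
        norm_num
      have ey : PowerSeries.coeff (R := ℂ) 2 (Dop (Iser 2)) = 1 := by
        rw [coeff_Dop, Iser, PowerSeries.coeff_mk]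
        norm_num [Nat.factorial]
      rw [e0, e2, e1, ey] at h2
      simpa using h2
    intro h
    have := congrArg (PowerSeries.coeff (R := ℂ) 1) h
    rw [coeff_Dop, hco] at this
    simp at this
  -- final combination
  have hfin : (Dop X₂ - (-10 * (1 - (PowerSeries.C (R := ℂ)) (1 / 5 ^ 5) * L ^ 5) + 10 * (1 - (PowerSeries.C (R := ℂ)) (1 / 5 ^ 5) * L ^ 5) * X₁ + 5 * (1 - (PowerSeries.C (R := ℂ)) (1 / 5 ^ 5) * L ^ 5) * X₂
      - 2 * X₁ ^ 2 - 4 * Dop X₁ - 2 * X₁ * X₂ - X₂ ^ 2)) * ((Dop g₂) * (Dop (Iser 1))^2) = 0 := by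
    linear_combination hKEY + (Dop (Iser 1))^2 * s2
      + (2 * (Dop (Iser 1)) * (Dop (Dop (Iser 1))) - 5 * (Dop (Iser 1))^2 * (1 - (PowerSeries.C (R := ℂ)) (1 / 5 ^ 5) * L ^ 5) + (Dop (Iser 1))^2 * X₂) * hX₂
      + (4 * (Dop (Iser 1)) * (Dop g₂)) * s1
      - (2 * (Dop (Dop (Iser 1))) * (Dop g₂) + 10 * (Dop (Iser 1)) * (Dop g₂) * (1 - (PowerSeries.C (R := ℂ)) (1 / 5 ^ 5) * L ^ 5)
          - 2 * (Dop (Iser 1)) * (Dop g₂) * X₂ - 2 * (Dop (Iser 1)) * (Dop g₂) * X₁) * hX₁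
  have hMne : (Dop g₂) * (Dop (Iser 1))^2 ≠ 0 := mul_ne_zero hg1ne (pow_ne_zero 2 hc0ne)
  have hdiff := (mul_eq_zero.mp hfin).resolve_right hMne
  linear_combination hdiff
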